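/- arXiv:2605.00535 — 2 statements merged into one kernel-verified Lean document; each statement's English description precedes it below -/
import Mathlib

section
/- Let b ∈ ℂ^N with b ≠ 0, y ∈ ℂ, and c > 0. Over the feasible set {f ∈ ℂ^N : |f(i)| ≤ c for all i}, the minimum of |bᴴ f - y|² equals (max{0, |y| - c‖b‖₁})², where ‖b‖₁ = Σᵢ |b(i)|. -/
open Matrix

/-- Over {f : |f(i)| ≤ c}, the minimum of |bᴴf - y|² equals (max{0, |y| - c‖b‖₁})². -/
theorem stmt_5 {N : ℕ} (b : Fin N → ℂ) (hb : b ≠ 0) (y : ℂ) (c : ℝ) (hc : 0 < c) :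
    IsLeast
      {t : ℝ | ∃ f : Fin N → ℂ, (∀ i, ‖f i‖ ≤ c) ∧
        t = ‖(∑ i, (starRingEnd ℂ) (b i) * f i) - y‖ ^ 2}
      ((max 0 (‖y‖ - c * ∑ i, ‖b i‖)) ^ 2) := by
  set S : ℝ := ∑ i, ‖b i‖ with hS
  have hSpos : 0 < S := by
    obtain ⟨i, hi⟩ : ∃ i, b i ≠ 0 := by
      by_contra h; push_neg at h; exact hb (funext h)
    exact Finset.sum_pos' (fun j _ => norm_nonneg _)
      ⟨i, Finset.mem_univ i, (norm_pos_iff.mpr hi)⟩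
  constructor
  · -- membership
    set t : ℝ := min c (‖y‖ / S) with ht
    have ht0 : 0 ≤ t := le_min hc.le (div_nonneg (norm_nonneg _) hSpos.le)
    have htc : t ≤ c := min_le_left _ _
    have htS : t * S ≤ ‖y‖ := by
      have h1 : t ≤ ‖y‖ / S := min_le_right _ _
      calc t * S ≤ (‖y‖ / S) * S := by nlinarith
        _ = ‖y‖ := div_mul_cancel₀ _ hSpos.ne'
    set w : ℂ := if y = 0 then 1 else y / ‖y‖ with hw
    have hwabs : ‖w‖ = 1 := by
      rw [hw]; split_ifs with h
      · simp
      · rw [norm_div, Complex.norm_real, Real.norm_eq_abs, abs_of_nonneg (norm_nonneg y),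
          div_self (norm_ne_zero_iff.mpr h)]
    have hyw : y = (‖y‖ : ℂ) * w := by
      rw [hw]; split_ifs with h
      · simp [h]
      · have hne : (‖y‖ : ℂ) ≠ 0 := by
          simpa using (norm_pos_iff.mpr h).ne'
        field_simp
    refine ⟨fun i => (t : ℂ) * w * (b i / ‖b i‖), ?_, ?_⟩
    · intro i
      show ‖(t : ℂ) * w * (b i / ‖b i‖)‖ ≤ c
      by_cases h : b i = 0
      · simp [h, hc.le]
      · have heq : ‖(t : ℂ) * w * (b i / ‖b i‖)‖ = t := by
          rw [norm_mul, norm_mul, norm_div, Complex.norm_real, Real.norm_eq_abs, Complex.norm_real, Real.norm_eq_abs,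
            abs_of_nonneg (norm_nonneg (b i)), div_self (norm_pos_iff.mpr h).ne',
            abs_of_nonneg ht0, hwabs]
          ring
        rw [heq]; exact htc
    · have key : ∀ i, (starRingEnd ℂ) (b i) * ((t : ℂ) * w * (b i / ‖b i‖))
          = (t : ℂ) * w * (‖b i‖ : ℂ) := by
        intro i
        by_cases h : b i = 0
        · simp [h]
        · have habs : (‖b i‖ : ℂ) ≠ 0 := by
            simpa using (norm_pos_iff.mpr h).ne'
          have hcm : (starRingEnd ℂ) (b i) * b i = ((‖b i‖ : ℂ))^2 := by
            rw [← Complex.normSq_eq_conj_mul_self, ← Complex.sq_norm]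
            push_cast; ring
          field_simp
          linear_combination ((t : ℂ) * w) * hcm
      have hsum : (∑ i, (starRingEnd ℂ) (b i) * ((t : ℂ) * w * (b i / ‖b i‖)))
          = (t : ℂ) * w * (S : ℂ) := by
        simp_rw [key]
        rw [← Finset.mul_sum, hS]
        push_cast
        ring
      have hdiff : (t : ℂ) * w * (S : ℂ) - y = ((t * S - ‖y‖ : ℝ) : ℂ) * w := by
        nth_rewrite 1 [hyw]
        push_cast; ring
      rw [hsum, hdiff, norm_mul, hwabs, mul_one, Complex.norm_real, Real.norm_eq_abs,
        abs_of_nonpos (by linarith), neg_sub]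
      congr 1
      rcases le_total c (‖y‖ / S) with h | h
      · have htt : t = c := min_eq_left h
        have hcs : c * S ≤ ‖y‖ := (le_div_iff₀ hSpos).mp h
        rw [htt, max_eq_right (by linarith)]
      · have htt : t = ‖y‖ / S := min_eq_right h
        have hts : t * S = ‖y‖ := by rw [htt]; field_simp
        have hcs : ‖y‖ ≤ c * S := (div_le_iff₀ hSpos).mp h
        rw [hts, max_eq_left (by linarith), sub_self]
  · rintro r ⟨f, hf, rfl⟩
    have hz : ‖∑ i, (starRingEnd ℂ) (b i) * f i‖ ≤ c * S := by
      calc ‖∑ i, (starRingEnd ℂ) (b i) * f i‖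
          ≤ ∑ i, ‖(starRingEnd ℂ) (b i) * f i‖ :=
            norm_sum_le _ _
        _ ≤ ∑ i, ‖b i‖ * c := by
            apply Finset.sum_le_sum
            intro i _
            rw [norm_mul, Complex.norm_conj]
            exact mul_le_mul_of_nonneg_left (hf i) (norm_nonneg _)
        _ = c * S := by rw [hS, ← Finset.sum_mul]; ring
    have hlb : max 0 (‖y‖ - c * S) ≤
        ‖(∑ i, (starRingEnd ℂ) (b i) * f i) - y‖ := by
      apply max_le
      · exact norm_nonneg _
      · have h1 := norm_sub_norm_le y (∑ i, (starRingEnd ℂ) (b i) * f i)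
        rw [norm_sub_rev] at h1
        linarith
    exact pow_le_pow_left₀ (le_max_left _ _) hlb 2
end

section
/- Let b ∈ ℂ^N, y ∈ ℂ, c > 0, and suppose |y| ≤ c ‖b‖₁. Then there exist nonnegative reals ρᵢ ∈ [0, c] such that the vector f with f(i) = ρᵢ e^{j(∠y + ∠b(i))} satisfies bᴴ f = y, i.e., the constrained least-squares subproblem attains the value zero. -/
open Matrix Complex

lemma conj_mul_exp_arg (z : ℂ) :
    (starRingEnd ℂ) z * Complex.exp ((z.arg : ℂ) * Complex.I) = (‖z‖ : ℂ) := by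
  have h := Complex.norm_mul_exp_arg_mul_I z
  have hconj : (starRingEnd ℂ) z =
      (‖z‖ : ℂ) * Complex.exp (-(z.arg : ℂ) * Complex.I) := by
    conv_lhs => rw [← h]
    rw [_root_.map_mul, ← Complex.exp_conj]
    simp [Complex.conj_ofReal]
  rw [hconj, mul_assoc, ← Complex.exp_add]
  ring_nf
  simp

/-- If |y| ≤ c‖b‖₁ then there exist amplitudes ρᵢ ∈ [0, c] such that the phase-aligned
vector f(i) = ρᵢ e^{j(∠y + ∠b(i))} satisfies bᴴ f = y exactly. -/
theorem stmt_6 {N : ℕ} (b : Fin N → ℂ) (y : ℂ) (c : ℝ) (hc : 0 < c)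
    (hy : ‖y‖ ≤ c * ∑ i, ‖b i‖) :
    ∃ ρ : Fin N → ℝ, (∀ i, ρ i ∈ Set.Icc (0 : ℝ) c) ∧
      (∑ i, (starRingEnd ℂ) (b i) *
        ((ρ i : ℂ) * Complex.exp (Complex.I * ((y.arg : ℂ) + ((b i).arg : ℂ))))) = y := by
  set S : ℝ := ∑ i, ‖b i‖ with hS
  have hS0 : 0 ≤ S := Finset.sum_nonneg fun i _ => (norm_nonneg _)
  by_cases hSz : S = 0
  · -- then y = 0
    have hy0 : ‖y‖ = 0 := le_antisymm (by rw [hSz] at hy; simpa using hy)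
      (norm_nonneg _)
    have : y = 0 := by simpa using hy0
    refine ⟨fun _ => 0, fun i => ⟨le_refl _, le_of_lt hc⟩, ?_⟩
    simp [this]
  · have hSpos : 0 < S := lt_of_le_of_ne hS0 (Ne.symm hSz)
    set t : ℝ := ‖y‖ / S with ht
    have ht0 : 0 ≤ t := div_nonneg (norm_nonneg _) hS0
    have htc : t ≤ c := by
      rw [ht, div_le_iff₀ hSpos]
      linarith [hy]
    refine ⟨fun _ => t, fun i => ⟨ht0, htc⟩, ?_⟩
    have key : ∀ i, (starRingEnd ℂ) (b i) *
        ((t : ℂ) * Complex.exp (Complex.I * ((y.arg : ℂ) + ((b i).arg : ℂ)))) =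
        (t : ℂ) * Complex.exp ((y.arg : ℂ) * Complex.I) * (‖b i‖ : ℂ) := by
      intro i
      rw [← conj_mul_exp_arg (b i)]
      rw [mul_add, Complex.exp_add]
      ring
    rw [Finset.sum_congr rfl fun i _ => key i, ← Finset.mul_sum]
    have hsum : (∑ i, (‖b i‖ : ℂ)) = (S : ℂ) := by
      rw [hS]; push_cast; ring
    rw [hsum]
    have : (t : ℂ) * (S : ℂ) = (‖y‖ : ℂ) := by
      have hSne : (S : ℂ) ≠ 0 := by exact_mod_cast hSz
      rw [ht]; push_cast
      field_simp
    calc (t : ℂ) * Complex.exp ((y.arg : ℂ) * Complex.I) * (S : ℂ)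
        = (t : ℂ) * (S : ℂ) * Complex.exp ((y.arg : ℂ) * Complex.I) := by ring
      _ = (‖y‖ : ℂ) * Complex.exp ((y.arg : ℂ) * Complex.I) := by rw [this]
      _ = y := Complex.norm_mul_exp_arg_mul_I y
end
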